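/- Let v0 > 0, Omega_A > Omega_D > 0, S = Omega_A + Omega_D, and ell > 0. Suppose rho_alpha, rho_beta : [0, ell] → ℝ are differentiable, each satisfying v0·(1-2·rho(x))·rho'(x) = Omega_A - S·rho(x) on [0, ell], and suppose rho_alpha(x) < 1/2 < rho_beta(x) for all x ∈ [0, ell]. Let J_alpha(x) = v0·rho_alpha(x)(1 - rho_alpha(x)) and J_beta(x) = v0·rho_beta(x)(1 - rho_beta(x)). Then there exists at most one point x ∈ [0, ell] with J_alpha(x) = J_beta(x). -/

import Mathlib

/-!
Along any solution of the outer ODE the flux `J = v₀ ρ (1 - ρ)` satisfies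
`J' = v₀ (1 - 2ρ) ρ' = Ω_A - S ρ`. Hence the flux difference `J_α - J_β` has derivative
`S (ρ_β - ρ_α) > 0`, so it is strictly increasing and vanishes at most once.
-/

theorem HasDerivWithinAt.flux {ρ : ℝ → ℝ} {ρ' v x : ℝ} {s : Set ℝ}
    (h : HasDerivWithinAt ρ ρ' s x) :
    HasDerivWithinAt (fun y => v * ρ y * (1 - ρ y)) (v * (1 - 2 * ρ x) * ρ') s x :=
  ((h.const_mul v).fun_mul (h.const_sub 1)).congr_deriv (by ring)

theorem hasDerivWithinAt_flux_of_outer_ode {ρ : ℝ → ℝ} {ρ' v ΩA ΩD x : ℝ} {s : Set ℝ}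
    (h : HasDerivWithinAt ρ ρ' s x) (hode : v * (1 - 2 * ρ x) * ρ' = ΩA - (ΩA + ΩD) * ρ x) :
    HasDerivWithinAt (fun y => v * ρ y * (1 - ρ y)) (ΩA - (ΩA + ΩD) * ρ x) s x :=
  hode ▸ h.flux

theorem strictMonoOn_flux_sub_of_outer_ode {v ΩA ΩD : ℝ} {s : Set ℝ} (hs : Convex ℝ s)
    (hS : 0 < ΩA + ΩD) {ρa ρb ρa' ρb' : ℝ → ℝ}
    (hda : ∀ x ∈ s, HasDerivWithinAt ρa (ρa' x) s x)
    (hdb : ∀ x ∈ s, HasDerivWithinAt ρb (ρb' x) s x)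
    (hodea : ∀ x ∈ s, v * (1 - 2 * ρa x) * ρa' x = ΩA - (ΩA + ΩD) * ρa x)
    (hodeb : ∀ x ∈ s, v * (1 - 2 * ρb x) * ρb' x = ΩA - (ΩA + ΩD) * ρb x)
    (hlt : ∀ x ∈ interior s, ρa x < ρb x) :
    StrictMonoOn (fun x => v * ρa x * (1 - ρa x) - v * ρb x * (1 - ρb x)) s := by
  have hderiv : ∀ x ∈ s, HasDerivWithinAt
      (fun x => v * ρa x * (1 - ρa x) - v * ρb x * (1 - ρb x))
      ((ΩA + ΩD) * (ρb x - ρa x)) s x := fun x hx =>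
    ((hasDerivWithinAt_flux_of_outer_ode (hda x hx) (hodea x hx)).fun_sub
      (hasDerivWithinAt_flux_of_outer_ode (hdb x hx) (hodeb x hx))).congr_deriv (by ring)
  exact strictMonoOn_of_hasDerivWithinAt_pos hs
    (fun x hx => (hderiv x hx).continuousWithinAt)
    (fun x hx => (hderiv x (interior_subset hx)).mono interior_subset)
    (fun x hx => mul_pos hS (sub_pos.2 (hlt x hx)))

theorem stmt12_general (v0 ΩA ΩD ℓ : ℝ) (hD : 0 < ΩD) (hAD : ΩD < ΩA)
    (ρa ρb ρa' ρb' : ℝ → ℝ)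
    (hda : ∀ x ∈ Set.Icc 0 ℓ, HasDerivWithinAt ρa (ρa' x) (Set.Icc 0 ℓ) x)
    (hdb : ∀ x ∈ Set.Icc 0 ℓ, HasDerivWithinAt ρb (ρb' x) (Set.Icc 0 ℓ) x)
    (hodea : ∀ x ∈ Set.Icc 0 ℓ,
      v0 * (1 - 2 * ρa x) * ρa' x = ΩA - (ΩA + ΩD) * ρa x)
    (hodeb : ∀ x ∈ Set.Icc 0 ℓ,
      v0 * (1 - 2 * ρb x) * ρb' x = ΩA - (ΩA + ΩD) * ρb x)
    (hlt : ∀ x ∈ Set.Icc 0 ℓ, ρa x < 1 / 2 ∧ 1 / 2 < ρb x) :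
    ∀ x ∈ Set.Icc 0 ℓ, ∀ y ∈ Set.Icc 0 ℓ,
      v0 * ρa x * (1 - ρa x) = v0 * ρb x * (1 - ρb x) →
      v0 * ρa y * (1 - ρa y) = v0 * ρb y * (1 - ρb y) → x = y := by
  intro x hx y hy hx0 hy0
  have hab : ∀ z ∈ interior (Set.Icc 0 ℓ), ρa z < ρb z := fun z hz =>
    (hlt z (interior_subset hz)).1.trans (hlt z (interior_subset hz)).2
  have hmono := strictMonoOn_flux_sub_of_outer_ode (convex_Icc 0 ℓ) (by linarith)
    hda hdb hodea hodeb hab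
  exact hmono.injOn hx hy (by simp only [hx0, hy0, sub_self])

/-- the fluxes of a low-density branch (`ρα < 1/2`) and a
high-density branch (`ρβ > 1/2`) of the outer ODE coincide in at most one point
of `[0, ℓ]`. -/
theorem stmt12 (v0 ΩA ΩD ℓ : ℝ) (hv : 0 < v0) (hD : 0 < ΩD) (hAD : ΩD < ΩA)
    (hℓ : 0 < ℓ) (ρa ρb ρa' ρb' : ℝ → ℝ)
    (hda : ∀ x ∈ Set.Icc 0 ℓ, HasDerivWithinAt ρa (ρa' x) (Set.Icc 0 ℓ) x)
    (hdb : ∀ x ∈ Set.Icc 0 ℓ, HasDerivWithinAt ρb (ρb' x) (Set.Icc 0 ℓ) x)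
    (hodea : ∀ x ∈ Set.Icc 0 ℓ,
      v0 * (1 - 2 * ρa x) * ρa' x = ΩA - (ΩA + ΩD) * ρa x)
    (hodeb : ∀ x ∈ Set.Icc 0 ℓ,
      v0 * (1 - 2 * ρb x) * ρb' x = ΩA - (ΩA + ΩD) * ρb x)
    (hlt : ∀ x ∈ Set.Icc 0 ℓ, ρa x < 1 / 2 ∧ 1 / 2 < ρb x) :
    ∀ x ∈ Set.Icc 0 ℓ, ∀ y ∈ Set.Icc 0 ℓ,
      v0 * ρa x * (1 - ρa x) = v0 * ρb x * (1 - ρb x) →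
      v0 * ρa y * (1 - ρa y) = v0 * ρb y * (1 - ρb y) → x = y :=
  stmt12_general v0 ΩA ΩD ℓ hD hAD ρa ρb ρa' ρb' hda hdb hodea hodeb hlt
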